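/- Let m_1, …, m_h and n_1, …, n_k be natural numbers with m_1 + ⋯ + m_h = n_1 + ⋯ + n_k. Then, as integers, (root multiplicity at Complex.I of ∏_{j=1}^{h} QF_{m_j}) − (root multiplicity at Complex.I of ∏_{l=1}^{k} QF_{n_l}) = ⌊(#{l : n_l is odd})/2⌋ − ⌊(#{j : m_j is odd})/2⌋. (Equivalently: the order at q = i of the generalized quantum multinomial [m_1, …, m_h ; n_1, …, n_k] = [m_1]!⋯[m_h]!/([n_1]!⋯[n_k]!) equals ⌊#{odd n_l}/2⌋ − ⌊#{odd m_j}/2⌋.) -/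
import Mathlib


open Polynomial Finset

/-- The polynomial form `P_n(X) = ∑_{k=0}^{n-1} X^{2k}` of the quantum integer `[n]`. -/
noncomputable def quantumP (n : ℕ) : Polynomial ℂ :=
  ∑ k ∈ Finset.range n, Polynomial.X ^ (2 * k)

/-- The polynomial form `QF_n = ∏_{m=1}^n P_m` of the quantum factorial `[n]!`. -/
noncomputable def quantumQF (n : ℕ) : Polynomial ℂ :=
  ∏ m ∈ Finset.range n, quantumP (m + 1)

lemma quantumP_ne_zero (n : ℕ) : quantumP (n + 1) ≠ 0 := by
  intro h
  have := congrArg (Polynomial.eval 1) h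
  simp [quantumP, Polynomial.eval_finset_sum] at this
  exact Nat.cast_add_one_ne_zero n this

lemma quantumP_mul (n : ℕ) :
    quantumP n * ((Polynomial.X : Polynomial ℂ) ^ 2 - 1) =
      Polynomial.X ^ (2 * n) - 1 := by
  have h1 : quantumP n = ∑ k ∈ Finset.range n, ((Polynomial.X : Polynomial ℂ) ^ 2) ^ k := by
    simp [quantumP, ← pow_mul]
  rw [h1, geom_sum_mul, ← pow_mul]

lemma eval_I_quantumP (n : ℕ) :
    (quantumP n).eval Complex.I = if Even n then 0 else 1 := by
  have : (quantumP n).eval Complex.I = ∑ k ∈ Finset.range n, (-1 : ℂ) ^ k := by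
    simp [quantumP, Polynomial.eval_finset_sum, pow_mul, Complex.I_sq]
  rw [this, neg_one_geom_sum]

lemma rm_quantumP (n : ℕ) :
    Polynomial.rootMultiplicity Complex.I (quantumP (n + 1)) =
      if Even (n + 1) then 1 else 0 := by
  by_cases he : Even (n + 1)
  · rw [if_pos he]
    have hpol := quantumP_mul (n + 1)
    have hX2 : Polynomial.rootMultiplicity Complex.I
        ((Polynomial.X : Polynomial ℂ) ^ 2 - 1) = 0 := by
      apply Polynomial.rootMultiplicity_eq_zero
      simp only [Polynomial.IsRoot, Polynomial.eval_sub, Polynomial.eval_pow,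
        Polynomial.eval_one, Polynomial.eval_X, Complex.I_sq]
      norm_num
    have hne : ((Polynomial.X : Polynomial ℂ) ^ (2 * (n + 1)) - 1) ≠ 0 := by
      rw [← hpol]
      exact mul_ne_zero (quantumP_ne_zero n) (by
        intro h
        have := congrArg (Polynomial.eval 0) h
        simp at this)
    have hmul : Polynomial.rootMultiplicity Complex.I
        ((Polynomial.X : Polynomial ℂ) ^ (2 * (n + 1)) - 1) =
        Polynomial.rootMultiplicity Complex.I (quantumP (n + 1)) + 0 := by
      rw [← hX2, ← hpol, Polynomial.rootMultiplicity_mul (hpol ▸ hne)]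
    have hroot : ((Polynomial.X : Polynomial ℂ) ^ (2 * (n + 1)) - 1).IsRoot Complex.I := by
      simp [Polynomial.IsRoot, pow_mul, Complex.I_sq, he.neg_one_pow]
    have h1 : 0 < Polynomial.rootMultiplicity Complex.I
        ((Polynomial.X : Polynomial ℂ) ^ (2 * (n + 1)) - 1) :=
      (Polynomial.rootMultiplicity_pos hne).mpr hroot
    have h2 : ¬ 1 < Polynomial.rootMultiplicity Complex.I
        ((Polynomial.X : Polynomial ℂ) ^ (2 * (n + 1)) - 1) := by
      rw [Polynomial.one_lt_rootMultiplicity_iff_isRoot hne]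
      rintro ⟨-, hd⟩
      simp only [Polynomial.IsRoot, Polynomial.derivative_sub, Polynomial.derivative_one,
        Polynomial.derivative_X_pow, sub_zero, Polynomial.eval_mul, Polynomial.eval_pow,
        Polynomial.eval_natCast, Polynomial.eval_C, Polynomial.eval_X] at hd
      rcases mul_eq_zero.mp hd with h | h
      · exact Nat.cast_ne_zero (R := ℂ) |>.mpr (by positivity) h
      · exact (pow_ne_zero _ Complex.I_ne_zero) h
    rw [hmul] at h1 h2
    have h2' := Nat.not_lt.mp h2
    have h3 := Nat.le_antisymm h2' h1
    rw [Nat.add_zero] at h3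
    exact h3
  · rw [if_neg he]
    apply Polynomial.rootMultiplicity_eq_zero
    simp [Polynomial.IsRoot, eval_I_quantumP, he]

lemma quantumQF_ne_zero (n : ℕ) : quantumQF n ≠ 0 := by
  rw [quantumQF, Finset.prod_ne_zero_iff]
  exact fun i _ => quantumP_ne_zero i

lemma rm_quantumQF (n : ℕ) :
    Polynomial.rootMultiplicity Complex.I (quantumQF n) = n / 2 := by
  induction n with
  | zero => simp [quantumQF]
  | succ n ih =>
    have hstep : quantumQF (n + 1) = quantumQF n * quantumP (n + 1) := by
      rw [quantumQF, quantumQF, Finset.prod_range_succ]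
    rw [hstep, Polynomial.rootMultiplicity_mul
      (mul_ne_zero (quantumQF_ne_zero n) (quantumP_ne_zero n)), ih, rm_quantumP]
    rcases Nat.even_or_odd (n + 1) with he | ho
    · rw [if_pos he]
      obtain ⟨c, hc⟩ := he
      omega
    · rw [if_neg (Nat.not_even_iff_odd.mpr ho)]
      obtain ⟨c, hc⟩ := ho
      omega

lemma rm_prod {ι : Type*} (s : Finset ι) (f : ι → Polynomial ℂ) (hf : ∀ i ∈ s, f i ≠ 0) :
    Polynomial.rootMultiplicity Complex.I (∏ i ∈ s, f i) =
      ∑ i ∈ s, Polynomial.rootMultiplicity Complex.I (f i) := by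
  induction s using Finset.cons_induction with
  | empty => simp
  | cons a s ha ih =>
    rw [Finset.prod_cons, Finset.sum_cons,
      Polynomial.rootMultiplicity_mul (mul_ne_zero (hf a (Finset.mem_cons_self a s))
        (Finset.prod_ne_zero_iff.mpr fun i hi => hf i (Finset.mem_cons_of_mem hi))),
      ih fun i hi => hf i (Finset.mem_cons_of_mem hi)]

/-- The order at `q = i` of the generalized quantum multinomial
`[m_1, …, m_h ; n_1, …, n_k]` equals `⌊#{odd n_l}/2⌋ − ⌊#{odd m_j}/2⌋`. -/
theorem ord_I_quantumMultinomial (h k : ℕ) (m : Fin h → ℕ) (n : Fin k → ℕ)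
    (hsum : ∑ j, m j = ∑ l, n l) :
    (Polynomial.rootMultiplicity Complex.I (∏ j, quantumQF (m j)) : ℤ) -
      (Polynomial.rootMultiplicity Complex.I (∏ l, quantumQF (n l)) : ℤ) =
    ((((Finset.univ.filter fun l => Odd (n l)).card / 2 : ℕ) : ℤ) -
      (((Finset.univ.filter fun j => Odd (m j)).card / 2 : ℕ) : ℤ)) := by
  have hA : Polynomial.rootMultiplicity Complex.I (∏ j, quantumQF (m j)) =
      ∑ j, m j / 2 := by
    rw [rm_prod _ _ fun i _ => quantumQF_ne_zero (m i)]
    exact Finset.sum_congr rfl fun i _ => rm_quantumQF (m i)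
  have hB : Polynomial.rootMultiplicity Complex.I (∏ l, quantumQF (n l)) =
      ∑ l, n l / 2 := by
    rw [rm_prod _ _ fun i _ => quantumQF_ne_zero (n i)]
    exact Finset.sum_congr rfl fun i _ => rm_quantumQF (n i)
  have hcm : (Finset.univ.filter fun j => Odd (m j)).card = ∑ j, m j % 2 := by
    rw [Finset.card_filter]
    exact Finset.sum_congr rfl fun i _ => by
      simp only [Nat.odd_iff]; split <;> omega
  have hcn : (Finset.univ.filter fun l => Odd (n l)).card = ∑ l, n l % 2 := by
    rw [Finset.card_filter]
    exact Finset.sum_congr rfl fun i _ => by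
      simp only [Nat.odd_iff]; split <;> omega
  have hm2 : ∑ j, m j = 2 * (∑ j, m j / 2) + ∑ j, m j % 2 := by
    rw [Finset.mul_sum, ← Finset.sum_add_distrib]
    exact Finset.sum_congr rfl fun i _ => by omega
  have hn2 : ∑ l, n l = 2 * (∑ l, n l / 2) + ∑ l, n l % 2 := by
    rw [Finset.mul_sum, ← Finset.sum_add_distrib]
    exact Finset.sum_congr rfl fun i _ => by omega
  rw [hA, hB, hcm, hcn]
  omega
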